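/- arXiv:1911.04480 — 8 statements merged into one kernel-verified Lean document; each statement's English description precedes it below -/
import Mathlib

section
/- The product of a compact space and a Hurewicz space is a Hurewicz space. -/
open Set Filter

def IsHurewicz (X : Type*) [TopologicalSpace X] : Prop :=
  ∀ U : ℕ → Set (Set X),
    (∀ n, ∀ V ∈ U n, IsOpen V) → (∀ n, ⋃₀ U n = Set.univ) →
    ∃ V : ℕ → Set (Set X),
      (∀ n, V n ⊆ U n ∧ (V n).Finite) ∧
      ∀ x : X, ∀ᶠ n in Filter.atTop, x ∈ ⋃₀ V n

theorem compact_prod_hurewicz (X Y : Type*) [TopologicalSpace X] [CompactSpace X]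
    [TopologicalSpace Y] (hY : IsHurewicz Y) : IsHurewicz (X × Y) := by
  intro U hUopen hUcov
  by_cases hY' : Nonempty Y
  · haveI := hY'
    have key : ∀ n (y : Y), ∃ (W : Set Y) (F : Set (Set (X × Y))),
        IsOpen W ∧ y ∈ W ∧ F ⊆ U n ∧ F.Finite ∧
        ∀ x : X, ∀ y' ∈ W, ∃ u ∈ F, (x, y') ∈ u := by
      intro n y
      have hx : ∀ x : X, ∃ u ∈ U n, (x, y) ∈ u := by
        intro x
        have : (x, y) ∈ ⋃₀ U n := by rw [hUcov n]; trivial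
        simpa using this
      choose u hu hxu using hx
      have hab : ∀ x : X, ∃ a b, IsOpen a ∧ IsOpen b ∧ x ∈ a ∧ y ∈ b ∧ a ×ˢ b ⊆ u x := by
        intro x
        rcases isOpen_prod_iff.mp (hUopen n (u x) (hu x)) x y (hxu x) with
          ⟨a, b, ha, hb, hxa, hyb, hsub⟩
        exact ⟨a, b, ha, hb, hxa, hyb, hsub⟩
      choose a b ha hb hxa hyb hsub using hab
      obtain ⟨t, ht⟩ := isCompact_univ.elim_finite_subcover a ha
        (fun x _ => mem_iUnion.mpr ⟨x, hxa x⟩)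
      refine ⟨⋂ x ∈ t, b x, u '' t, ?_, ?_, ?_, ?_, ?_⟩
      · exact isOpen_biInter_finset (fun x _ => hb x)
      · exact mem_iInter₂.mpr fun x _ => hyb x
      · rintro _ ⟨x, _, rfl⟩; exact hu x
      · exact t.finite_toSet.image u
      · intro x y' hy'
        have : x ∈ ⋃ i ∈ t, a i := ht (mem_univ x)
        rcases mem_iUnion₂.mp this with ⟨i, hi, hxi⟩
        exact ⟨u i, mem_image_of_mem u hi, hsub i ⟨hxi, mem_iInter₂.mp hy' i hi⟩⟩
    choose w f hWopen hyW hFsub hFfin hFcov using key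
    obtain ⟨V, hV, hVcov⟩ := hY (fun n => range (w n))
      (fun n s hs => by rcases hs with ⟨y, rfl⟩; exact hWopen n y)
      (fun n => eq_univ_of_forall fun y => ⟨w n y, mem_range_self y, hyW n y⟩)
    refine ⟨fun n => ⋃ s ∈ V n, f n (Function.invFun (w n) s), ?_, ?_⟩
    · intro n
      constructor
      · intro u hu
        rcases mem_iUnion₂.mp hu with ⟨s, hs, hus⟩
        exact hFsub n _ hus
      · exact (hV n).2.biUnion fun s _ => hFfin n _
    · rintro ⟨x, y⟩
      filter_upwards [hVcov y] with n hn
      rcases hn with ⟨s, hs, hys⟩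
      have hsr : s ∈ range (w n) := (hV n).1 hs
      have heq : w n (Function.invFun (w n) s) = s := Function.invFun_eq hsr
      obtain ⟨u, huF, hxu⟩ := hFcov n (Function.invFun (w n) s) x y (by rw [heq]; exact hys)
      exact ⟨u, mem_iUnion₂.mpr ⟨s, hs, huF⟩, hxu⟩
  · have hempty : IsEmpty Y := not_nonempty_iff.mp hY'
    refine ⟨fun _ => ∅, fun n => ⟨empty_subset _, finite_empty⟩, ?_⟩
    rintro ⟨x, y⟩
    exact (hempty.false y).elim
end

section
/- If a separable metrizable space X is a union of fewer than 𝔟 many Hurewicz subspaces, then X is Hurewicz, where 𝔟 is the minimal cardinality of a subset of ω^ω unbounded with respect to eventual domination ≤*. -/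
/-- The bounding number \`𝔟\`: the least cardinality of a family in \`ℕ → ℕ\`
with no upper bound with respect to eventual domination. -/
noncomputable def bCardinal : Cardinal :=
  sInf { c : Cardinal |
    ∃ F : Set (ℕ → ℕ), Cardinal.mk F = c ∧
      ∀ g : ℕ → ℕ, ∃ f ∈ F, ¬ ∀ᶠ n in Filter.atTop, f n ≤ g n }

open Filter Set

theorem exists_eventually_le_of_mk_lt_bCardinal {ι : Type} (hι : Cardinal.mk ι < bCardinal)
    (f : ι → ℕ → ℕ) : ∃ g : ℕ → ℕ, ∀ i, ∀ᶠ n in atTop, f i n ≤ g n := by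
  by_contra! h
  refine hι.not_ge ((csInf_le' (a := Cardinal.mk (range f)) ?_).trans Cardinal.mk_range_le)
  refine ⟨range f, rfl, fun g => ?_⟩
  obtain ⟨i, hi⟩ := h g
  exact ⟨f i, mem_range_self i, not_eventually.2 (hi.mono fun _ => not_le.2)⟩

theorem LindelofSpace.exists_seq_subcover {X : Type*} [TopologicalSpace X]
    [LindelofSpace X] [Nonempty X] {U : Set (Set X)} (hU : ∀ V ∈ U, IsOpen V)
    (hcov : ⋃₀ U = univ) : ∃ e : ℕ → Set X, (∀ k, e k ∈ U) ∧ ⋃ k, e k = univ := by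
  obtain ⟨V, hVU, -⟩ := nonempty_sUnion.1 (hcov ▸ univ_nonempty)
  have : Nonempty U := ⟨⟨V, hVU⟩⟩
  obtain ⟨f, hf⟩ := isLindelof_univ.indexed_countable_subcover (fun V : U => (V : Set X))
    (fun V => hU V V.2) (by rw [← sUnion_eq_iUnion, hcov])
  exact ⟨fun k => f k, fun k => (f k).2, univ_subset_iff.1 hf⟩

theorem Set.Finite.exists_subset_image_Iic {α : Type*} {e : ℕ → α} {V : Set α}
    (hV : V.Finite) (hVe : V ⊆ range e) : ∃ m, V ⊆ e '' Iic m := by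
  rw [← image_univ] at hVe
  obtain ⟨t, -, ht, rfl⟩ := exists_subset_image_finite_and.1 ⟨V, hVe, hV, rfl⟩
  obtain ⟨m, hm⟩ := ht.bddAbove
  exact ⟨m, image_mono hm⟩

section

variable {X : Type*} [TopologicalSpace X]

theorem IsHurewicz.exists_bound (hX : IsHurewicz X) (e : ℕ → ℕ → Set X)
    (he : ∀ n k, IsOpen (e n k)) (hcov : ∀ n, ⋃ k, e n k = univ) :
    ∃ g : ℕ → ℕ, ∀ x, ∀ᶠ n in atTop, ∃ k ≤ g n, x ∈ e n k := by
  obtain ⟨V, hV, hγ⟩ := hX (fun n => range (e n)) (by rintro n _ ⟨k, rfl⟩; exact he n k)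
    (fun n => by rw [sUnion_range, hcov])
  choose g hg using fun n => (hV n).2.exists_subset_image_Iic (hV n).1
  refine ⟨g, fun x => (hγ x).mono ?_⟩
  rintro n ⟨W, hW, hxW⟩
  obtain ⟨k, hk, rfl⟩ := hg n hW
  exact ⟨k, hk, hxW⟩

theorem isHurewicz_of_forall_exists_bound [LindelofSpace X]
    (h : ∀ e : ℕ → ℕ → Set X, (∀ n k, IsOpen (e n k)) → (∀ n, ⋃ k, e n k = univ) →
      ∃ g : ℕ → ℕ, ∀ x, ∀ᶠ n in atTop, ∃ k ≤ g n, x ∈ e n k) :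
    IsHurewicz X := by
  intro U hUo hUcov
  cases isEmpty_or_nonempty X
  · exact ⟨fun _ => ∅, fun _ => ⟨empty_subset _, finite_empty⟩, isEmptyElim⟩
  choose e heU hecov using fun n =>
    LindelofSpace.exists_seq_subcover (hUo n) (hUcov n)
  obtain ⟨g, hg⟩ := h e (fun n k => hUo n _ (heU n k)) hecov
  refine ⟨fun n => e n '' Iic (g n),
    fun n => ⟨image_subset_iff.2 fun k _ => heU n k, (finite_Iic _).image _⟩,
    fun x => (hg x).mono ?_⟩
  rintro n ⟨k, hk, hx⟩
  exact ⟨e n k, mem_image_of_mem _ hk, hx⟩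

end

theorem union_lt_b_hurewicz (X : Type*) [TopologicalSpace X]
    [TopologicalSpace.MetrizableSpace X] [TopologicalSpace.SeparableSpace X]
    (ι : Type) (hι : Cardinal.mk ι < bCardinal) (S : ι → Set X)
    (hH : ∀ i, IsHurewicz (S i)) (hcov : ⋃ i, S i = Set.univ) :
    IsHurewicz X := by
  let := TopologicalSpace.pseudoMetrizableSpaceUniformity X
  have := TopologicalSpace.pseudoMetrizableSpaceUniformity_countably_generated X
  have := UniformSpace.secondCountable_of_separable X
  refine isHurewicz_of_forall_exists_bound fun e he hecov => ?_
  choose g hg using fun i => (hH i).exists_bound (fun n k => Subtype.val ⁻¹' e n k)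
    (fun n k => (he n k).preimage continuous_subtype_val)
    (fun n => by rw [← preimage_iUnion, hecov, preimage_univ])
  obtain ⟨G, hG⟩ := exists_eventually_le_of_mk_lt_bCardinal hι g
  refine ⟨G, fun x => ?_⟩
  obtain ⟨i, hxi⟩ := mem_iUnion.1 (hcov ▸ mem_univ x)
  filter_upwards [hg i ⟨x, hxi⟩, hG i] with n ⟨k, hk, hx⟩ hgG
  exact ⟨k, hk.trans hgG, hx⟩
end

section
/- Let ⟨Q_n : n ∈ ω⟩ be a sequence of finite non-empty subsets of the Cantor set 2^ω (viewed as a subset of [0,1]), let Q = ∪_n Q_n, and let R ⊇ Q be a G_δ subset of 2^ω. Then there exists a strictly increasing u ∈ ω^ω such that the set R(⟨Q_n⟩, u) := { x ∈ 2^ω : there exist infinitely many n with some q ∈ Q_n satisfying |x − q| < 1/u(n) } is contained in R. -/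
/-- The canonical identification of `2^ω` with the standard middle-thirds
Cantor subset of `[0,1]`. -/
noncomputable def cantorMap (x : ℕ → Bool) : ℝ :=
  ∑' n : ℕ, (if x n then 2 else 0) / 3 ^ (n + 1)

lemma cantorMap_eq (x : ℕ → Bool) :
    cantorMap x = (2 / 3) * Cardinal.cantorFunction (1 / 3) x := by
  unfold cantorMap Cardinal.cantorFunction
  rw [← tsum_mul_left]
  congr 1
  ext n
  cases h : x n <;>
    simp [Cardinal.cantorFunctionAux, h, pow_succ, div_pow, mul_comm, mul_div_assoc] <;>
    ring

lemma cantorMap_injective : Function.Injective cantorMap := by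
  intro x y h
  rw [cantorMap_eq, cantorMap_eq] at h
  exact Cardinal.cantorFunction_injective (by norm_num) (by norm_num)
    (mul_left_cancel₀ (by norm_num : (2 / 3 : ℝ) ≠ 0) h)

lemma continuous_cantorMap : Continuous cantorMap := by
  have : Continuous fun x : ℕ → Bool => ∑' n : ℕ, (if x n then (2:ℝ) else 0) / 3 ^ (n + 1) := by
    apply continuous_tsum (u := fun n => (2:ℝ) / 3 ^ (n + 1))
    · intro n
      exact (continuous_of_discreteTopology
        (f := fun b : Bool => (if b then (2:ℝ) else 0) / 3 ^ (n + 1))).comp (continuous_apply n)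
    · have : Summable fun n : ℕ => (2 / 3 : ℝ) * (1 / 3) ^ n :=
        (summable_geometric_of_lt_one (by norm_num) (by norm_num)).mul_left _
      have h : (fun n : ℕ => (2:ℝ) / 3 ^ (n + 1)) = fun n => (2 / 3 : ℝ) * (1 / 3) ^ n := by
        funext n
        rw [div_pow, one_pow, pow_succ]
        field_simp
      rwa [h]
    · intro n x
      rw [Real.norm_eq_abs, abs_div, abs_of_nonneg (by positivity : (0:ℝ) ≤ 3 ^ (n+1))]
      gcongr
      split <;> simp [abs_of_nonneg]
  exact this

theorem exists_increasing_u_subset_Gdelta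
    (Q : ℕ → Set (ℕ → Bool)) (hfin : ∀ n, (Q n).Finite)
    (hne : ∀ n, (Q n).Nonempty)
    (R : Set (ℕ → Bool)) (hR : IsGδ R) (hQR : ∀ n, Q n ⊆ R) :
    ∃ u : ℕ → ℕ, StrictMono u ∧
      { x : ℕ → Bool | ∃ᶠ n in Filter.atTop,
          ∃ q ∈ Q n, |cantorMap x - cantorMap q| < 1 / (u n : ℝ) } ⊆ R := by
  obtain ⟨U, hUopen, hUeq⟩ := isGδ_iff_eq_iInter_nat.1 hR
  -- the embedding
  have hemb : Topology.IsEmbedding cantorMap :=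
    (continuous_cantorMap.isClosedEmbedding cantorMap_injective).toIsEmbedding
  -- V n : finite intersection of the open sets
  set V : ℕ → Set (ℕ → Bool) := fun n => ⋂ m ∈ Finset.range (n + 1), U m with hV
  have hVopen : ∀ n, IsOpen (V n) := fun n =>
    isOpen_biInter_finset fun m _ => hUopen m
  have hRV : ∀ n, R ⊆ V n := by
    intro n y hy
    rw [hUeq] at hy
    exact Set.mem_iInter₂.2 fun m _ => Set.mem_iInter.1 hy m
  -- for each q ∈ Q n, a radius
  have key : ∀ n q, ∃ ε : ℝ, 0 < ε ∧ (q ∈ Q n → ∀ x,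
      |cantorMap x - cantorMap q| < ε → x ∈ V n) := by
    intro n q
    by_cases hq : q ∈ Q n
    · have hqV : q ∈ V n := hRV n (hQR n hq)
      have hmem : V n ∈ nhds q := (hVopen n).mem_nhds hqV
      rw [hemb.toIsInducing.nhds_eq_comap, Filter.mem_comap] at hmem
      obtain ⟨t, ht, hsub⟩ := hmem
      obtain ⟨ε, hε, hball⟩ := Metric.mem_nhds_iff.1 ht
      refine ⟨ε, hε, fun _ x hx => hsub ?_⟩
      exact hball (by simpa [Real.dist_eq] using hx)
    · exact ⟨1, one_pos, fun h => absurd h hq⟩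
  choose εf hεpos hεball using key
  -- minimum radius over the finite set Q n
  have hεn : ∀ n, ∃ ε : ℝ, 0 < ε ∧ ∀ q ∈ Q n, ε ≤ εf n q := by
    intro n
    have hne' : ((hfin n).toFinset).Nonempty := by
      simpa [Set.Finite.toFinset] using (hne n)
    refine ⟨(hfin n).toFinset.inf' hne' (εf n), ?_, ?_⟩
    · exact (Finset.lt_inf'_iff hne').2 fun q hq => hεpos n q
    · intro q hq
      exact Finset.inf'_le _ ((hfin n).mem_toFinset.2 hq)
  choose ε hε0 hεle using hεn
  have hN : ∀ n, ∃ N : ℕ, 1 / ((N : ℝ) + 1) < ε n := fun n => exists_nat_one_div_lt (hε0 n)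
  choose N hNlt using hN
  refine ⟨fun n => ∑ k ∈ Finset.range (n + 1), (N k + 1), ?_, ?_⟩
  · apply strictMono_nat_of_lt_succ
    intro n
    rw [Finset.sum_range_succ (n := n + 1)]
    omega
  · intro x hx
    rw [hUeq]
    refine Set.mem_iInter.2 fun m => ?_
    obtain ⟨n, ⟨q, hq, hlt⟩, hmn⟩ :=
      (hx.and_eventually (Filter.eventually_ge_atTop m)).exists
    have hun : ((N n : ℝ) + 1) ≤ (∑ k ∈ Finset.range (n + 1), (N k + 1) : ℕ) := by
      have : N n + 1 ≤ ∑ k ∈ Finset.range (n + 1), (N k + 1) :=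
        Finset.single_le_sum (f := fun k => N k + 1) (fun k _ => Nat.zero_le _)
          (Finset.mem_range.2 (Nat.lt_succ_self n))
      exact_mod_cast this
    have h1 : |cantorMap x - cantorMap q| < εf n q := by
      calc |cantorMap x - cantorMap q| < 1 / ((∑ k ∈ Finset.range (n + 1), (N k + 1) : ℕ) : ℝ) :=
            hlt
        _ ≤ 1 / ((N n : ℝ) + 1) := by
            apply one_div_le_one_div_of_le (by positivity) hun
        _ < ε n := hNlt n
        _ ≤ εf n q := hεle n q hq
    have hxV : x ∈ V n := hεball n q hq x h1
    exact Set.mem_iInter₂.1 hxV m (Finset.mem_range.2 (Nat.lt_succ_of_le hmn))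
end

section
/- Let Y ⊆ 2^ω be a Hurewicz space and Q ⊆ 2^ω countable. Then for every G_δ subset O of 2^ω × 2^ω containing Q × Y there exists a G_δ subset R of 2^ω with Q ⊆ R and R × Y ⊆ O. -/
theorem gdelta_covering_lemma (Y : Set (ℕ → Bool)) (hY : IsHurewicz Y)
    (Q : Set (ℕ → Bool)) (hQ : Q.Countable)
    (O : Set ((ℕ → Bool) × (ℕ → Bool))) (hO : IsGδ O)
    (hQYO : Q ×ˢ Y ⊆ O) :
    ∃ R : Set (ℕ → Bool), IsGδ R ∧ Q ⊆ R ∧ R ×ˢ Y ⊆ O := by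
  classical
  rcases Q.eq_empty_or_nonempty with hQe | hQne
  · exact ⟨∅, IsGδ.empty, by simp [hQe], by simp⟩
  obtain ⟨q, hq⟩ := hQ.exists_eq_range hQne
  -- decreasing sequence of open sets intersecting to within O
  obtain ⟨T, hTopen, hTcount, hTeq⟩ := hO
  obtain ⟨f, hf⟩ := (hTcount.insert Set.univ).exists_eq_range ⟨_, Set.mem_insert _ _⟩
  have hfopen : ∀ i, IsOpen (f i) := by
    intro i
    have : f i ∈ insert Set.univ T := hf ▸ Set.mem_range_self i
    rcases this with h | h
    · rw [h]; exact isOpen_univ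
    · exact hTopen _ h
  set O' : ℕ → Set ((ℕ → Bool) × (ℕ → Bool)) := fun n => ⋂ i ∈ Finset.range (n+1), f i with hO'
  have hO'open : ∀ n, IsOpen (O' n) := fun n =>
    isOpen_biInter_finset (fun i _ => hfopen i)
  have hOsub : ∀ n, O ⊆ O' n := by
    intro n x hx
    simp only [hO', Set.mem_iInter]
    intro i _
    have : f i ∈ insert Set.univ T := hf ▸ Set.mem_range_self i
    rcases this with h | h
    · rw [h]; trivial
    · rw [hTeq] at hx; exact hx _ h
  have hsubO : ∀ x, (∀ n, x ∈ O' n) → x ∈ O := by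
    intro x hx
    rw [hTeq]
    intro t ht
    have : t ∈ Set.range f := by rw [← hf]; exact Set.mem_insert_of_mem _ ht
    obtain ⟨i, rfl⟩ := this
    have := hx i
    simp only [hO', Set.mem_iInter] at this
    exact this i (Finset.mem_range.2 (Nat.lt_succ_self i))
  have hO'anti : ∀ {a b : ℕ}, a ≤ b → O' b ⊆ O' a := by
    intro a b hab x hx
    simp only [hO', Set.mem_iInter] at hx ⊢
    intro i hi
    exact hx i (Finset.mem_range.2 (lt_of_lt_of_le (Finset.mem_range.1 hi) (by omega)))
  -- the covers
  set 𝒰 : ℕ → ℕ → Set (Set ↥Y) := fun m n =>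
    { V | ∃ C D : Set (ℕ → Bool), IsOpen C ∧ IsOpen D ∧ q m ∈ C ∧
          C ×ˢ D ⊆ O' n ∧ V = Subtype.val ⁻¹' D } with h𝒰
  have h𝒰open : ∀ m n, ∀ V ∈ 𝒰 m n, IsOpen V := by
    rintro m n V ⟨C, D, _, hD, _, _, rfl⟩
    exact hD.preimage continuous_subtype_val
  have h𝒰cov : ∀ m n, ⋃₀ 𝒰 m n = Set.univ := by
    intro m n
    ext y
    simp only [Set.mem_univ, iff_true, Set.mem_sUnion]
    have hqm : q m ∈ Q := hq ▸ Set.mem_range_self m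
    have : (q m, (y : ℕ → Bool)) ∈ O' n := hOsub n (hQYO ⟨hqm, y.2⟩)
    obtain ⟨C, D, hC, hD, hqC, hyD, hsub⟩ :=
      (isOpen_prod_iff.1 (hO'open n)) _ _ this
    exact ⟨Subtype.val ⁻¹' D, ⟨C, D, hC, hD, hqC, hsub, rfl⟩, hyD⟩
  set e : ℕ ≃ ℕ × ℕ := (Denumerable.eqv (ℕ × ℕ)).symm with he
  obtain ⟨V, hVsub, hVev⟩ :=
    hY (fun k => 𝒰 (e k).1 (e k).2) (fun k => h𝒰open _ _) (fun k => h𝒰cov _ _)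
  -- choose tubes
  have hmem : ∀ k (W : Set ↥Y), ∃ C D : Set (ℕ → Bool), W ∈ V k →
      IsOpen C ∧ IsOpen D ∧ q (e k).1 ∈ C ∧ C ×ˢ D ⊆ O' (e k).2 ∧
      W = Subtype.val ⁻¹' D := by
    intro k W
    by_cases h : W ∈ V k
    · obtain ⟨C, D, h1, h2, h3, h4, h5⟩ := (hVsub k).1 h
      exact ⟨C, D, fun _ => ⟨h1, h2, h3, h4, h5⟩⟩
    · exact ⟨∅, ∅, fun h' => absurd h' h⟩
  choose C D hCD using hmem
  set G : ℕ → Set (ℕ → Bool) := fun k => ⋂ W ∈ V k, C k W with hG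
  have hGopen : ∀ k, IsOpen (G k) :=
    fun k => Set.Finite.isOpen_biInter (hVsub k).2
      (fun W hW => ((hCD k W) hW).1)
  have hGq : ∀ k, q (e k).1 ∈ G k := by
    intro k
    simp only [hG, Set.mem_iInter]
    exact fun W hW => ((hCD k W) hW).2.2.1
  have hkey : ∀ k r (y : ↥Y), r ∈ G k → y ∈ ⋃₀ V k → (r, (y : ℕ → Bool)) ∈ O' (e k).2 := by
    rintro k r y hr ⟨W, hW, hyW⟩
    obtain ⟨_, hDop, _, hsub, hWD⟩ := (hCD k W) hW
    have hrC : r ∈ C k W := by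
      simp only [hG, Set.mem_iInter] at hr; exact hr W hW
    have hyD : (y : ℕ → Bool) ∈ D k W := by rw [hWD] at hyW; exact hyW
    exact hsub ⟨hrC, hyD⟩
  set km : ℕ → ℕ → ℕ := fun m n => e.symm (m, n) with hkm
  have hekm : ∀ m n, e (km m n) = (m, n) := fun m n => e.apply_symm_apply _
  set H : ℕ → ℕ → Set (ℕ → Bool) := fun m n => ⋂ n' ∈ Finset.range (n+1), G (km m n') with hH
  have hHopen : ∀ m n, IsOpen (H m n) :=
    fun m n => isOpen_biInter_finset (fun i _ => hGopen _)
  have hHq : ∀ m n, q m ∈ H m n := by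
    intro m n
    simp only [hH, Set.mem_iInter]
    intro n' _
    have := hGq (km m n')
    rwa [hekm] at this
  refine ⟨⋂ n, ⋃ m, H m n, ?_, ?_, ?_⟩
  · exact .iInter_of_isOpen (fun n => isOpen_iUnion (fun m => hHopen m n))
  · intro x hx
    rw [hq] at hx
    obtain ⟨m, rfl⟩ := hx
    exact Set.mem_iInter.2 fun n => Set.mem_iUnion.2 ⟨m, hHq m n⟩
  · rintro ⟨r, y⟩ ⟨hr, hy⟩
    apply hsubO
    intro n
    -- pick m N for each N
    have hmN : ∀ N, ∃ m, r ∈ H m N := fun N => Set.mem_iUnion.1 (Set.mem_iInter.1 hr N)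
    choose mm hmm using hmN
    have hrG : ∀ N n', n' ≤ N → r ∈ G (km (mm N) n') := by
      intro N n' hn'
      have := hmm N
      simp only [hH, Set.mem_iInter] at this
      exact this n' (Finset.mem_range.2 (by omega))
    -- eventual coverage
    obtain ⟨K, hK⟩ := Filter.eventually_atTop.1 (hVev ⟨y, hy⟩)
    by_cases hA : ∃ N, n ≤ N ∧ K ≤ km (mm N) n
    · obtain ⟨N, hnN, hKk⟩ := hA
      have h1 : r ∈ G (km (mm N) n) := hrG N n hnN
      have h2 := hkey (km (mm N) n) r ⟨y, hy⟩ h1 (hK _ hKk)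
      rwa [hekm] at h2
    · push_neg at hA
      -- all values km (mm N) n < K for N ≥ n : find recurring m₀
      have hKpos : 0 < K := lt_of_le_of_lt (Nat.zero_le _) (hA n le_rfl)
      have : ∃ j : Fin K, Infinite ↑((fun N : ℕ => (⟨km (mm (N + n)) n, hA (N + n) (Nat.le_add_left _ _)⟩ : Fin K)) ⁻¹' {j}) :=
        Finite.exists_infinite_fiber _
      obtain ⟨j, hj⟩ := this
      have hjinf : Set.Infinite ((fun N : ℕ => (⟨km (mm (N + n)) n, hA (N + n) (Nat.le_add_left _ _)⟩ : Fin K)) ⁻¹' {j}) :=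
        Set.infinite_coe_iff.1 hj
      set m₀ : ℕ := (e (j : ℕ)).1 with hm₀
      have hfib : ∀ N ∈ ((fun N : ℕ => (⟨km (mm (N + n)) n, hA (N + n) (Nat.le_add_left _ _)⟩ : Fin K)) ⁻¹' {j}), mm (N + n) = m₀ := by
        intro N hN
        have : km (mm (N + n)) n = (j : ℕ) := congrArg Fin.val hN
        have := congrArg e this
        rw [hekm] at this
        rw [hm₀, ← this]
      -- r ∈ G (km m₀ n') for all n'
      have hrall : ∀ n', r ∈ G (km m₀ n') := by
        intro n'
        obtain ⟨N, hN, hNn'⟩ := hjinf.exists_gt n'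
        have := hrG (N + n) n' (le_of_lt (lt_of_lt_of_le hNn' (Nat.le_add_right _ _)))
        rwa [hfib N hN] at this
      -- find n' ≥ n with km m₀ n' ≥ K
      have hn' : ∃ n', n ≤ n' ∧ K ≤ km m₀ n' := by
        by_contra hB
        push_neg at hB
        obtain ⟨a, b, hab, heq⟩ :=
          Finite.exists_ne_map_eq_of_infinite
            (fun i : ℕ => (⟨km m₀ (i + n), hB (i + n) (Nat.le_add_left _ _)⟩ : Fin K))
        have h5 : km m₀ (a + n) = km m₀ (b + n) := congrArg Fin.val heq
        have h6 : ((m₀, a + n) : ℕ × ℕ) = (m₀, b + n) := e.symm.injective h5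
        have h7 : a + n = b + n := congrArg Prod.snd h6
        exact hab (by omega)
      obtain ⟨n', hnn', hKn'⟩ := hn'
      have h2 := hkey (km m₀ n') r ⟨y, hy⟩ (hrall n') (hK _ hKn')
      rw [hekm] at h2
      exact hO'anti hnn' h2
end

section
/- Assume 𝔟 > ω₁. If Y ⊆ 2^ω is Hurewicz and X ⊆ 2^ω satisfies property (†), then X × Y is Hurewicz. -/
/-- Property \`(†)\` for a subset \`X\` of the Cantor space. -/
def DaggerProp (X : Set (ℕ → Bool)) : Prop :=
  ∀ R : Set (ℕ → Bool) → Set (ℕ → Bool),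
    (∀ Q : Set (ℕ → Bool), Q ⊆ X → Q.Countable → IsGδ (R Q) ∧ Q ⊆ R Q) →
    ∃ (ι : Type) (_ : Cardinal.mk ι = Cardinal.aleph 1)
      (Qs : ι → Set (ℕ → Bool)) (K : ι → Set (ℕ → Bool)),
      (∀ i, Qs i ⊆ X ∧ (Qs i).Countable) ∧
      (∀ i, IsSigmaCompact (K i) ∧ K i ⊆ R (Qs i)) ∧
      X ⊆ ⋃ i, K i

/-!
Refine the `n`-th open cover of `X × Y` to an increasing sequence `W n m` of open sets. For each
countable `Q ⊆ X`, the Hurewicz property of `Y` along shrinking cylinders around the points of `Q`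
yields a Gδ set `R Q ⊇ Q` with `R Q × Y ⊆ ⋂ n, ⋃ m, W n m`; `(†)` then covers `X` by `ℵ₁`
σ-compact sets `K ⊆ R Q`. For compact `C ⊆ K` the sets `{y | C × {y} ⊆ W n m}` are open by the
tube lemma, so the Hurewicz property of `Y` gives `g_K` with every point of `K × Y` eventually in
`W n (g_K n)`. As `𝔟 > ℵ₁`, a single `g` eventually dominates all the `g_K`, and the finitely many
cover members making up `W n (g n)` witness the Hurewicz property of `X × Y`.
-/

open Set Filter TopologicalSpace

lemma exists_forall_eventually_le (f : ℕ → ℕ → ℕ) :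
    ∃ g : ℕ → ℕ, ∀ j, ∀ᶠ n in atTop, f j n ≤ g n :=
  ⟨fun n => (Finset.range (n + 1)).sup fun j => f j n, fun j =>
    eventually_atTop.2 ⟨j, fun n hn =>
      Finset.le_sup (f := fun j => f j n) (Finset.mem_range_succ_iff.2 hn)⟩⟩

lemma exists_forall_eventually_le_of_mk_lt_bCardinal {ι : Type} (f : ι → ℕ → ℕ)
    (hι : Cardinal.mk ι < bCardinal) : ∃ g : ℕ → ℕ, ∀ i, ∀ᶠ n in atTop, f i n ≤ g n := by
  by_contra h
  simp only [not_exists, not_forall] at h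
  have hb : bCardinal ≤ Cardinal.mk (range f) := csInf_le' ⟨range f, rfl, fun g => by
    obtain ⟨i, hi⟩ := h g
    exact ⟨f i, mem_range_self i, hi⟩⟩
  exact hι.not_ge (hb.trans Cardinal.mk_range_le)

lemma IsCompact.isOpen_setOf_forall_prod_mem {α β : Type*} [TopologicalSpace α]
    [TopologicalSpace β] {K : Set α} (hK : IsCompact K) {O : Set (α × β)} (hO : IsOpen O) :
    IsOpen {y | ∀ x ∈ K, (x, y) ∈ O} :=
  isOpen_iff_mem_nhds.2 fun _ hy => hK.eventually_forall_of_forall_eventually fun x hx =>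
    continuous_swap.continuousAt.preimage_mem_nhds (hO.mem_nhds (hy x hx))

section Hurewicz

variable {α β : Type*} [TopologicalSpace α] [TopologicalSpace β]

lemma IsHurewicz.exists_eventually_mem {S : Set α} (hS : IsHurewicz S) {A : ℕ → ℕ → Set α}
    (hA : ∀ n m, IsOpen (A n m)) (hAm : ∀ n, Monotone (A n)) (hSA : ∀ n, S ⊆ ⋃ m, A n m) :
    ∃ f : ℕ → ℕ, ∀ y ∈ S, ∀ᶠ n in atTop, y ∈ A n (f n) := by
  obtain ⟨V, hVU, hV⟩ := hS (fun n => range fun m => Subtype.val ⁻¹' A n m)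
    (by rintro n _ ⟨m, rfl⟩; exact (hA n m).preimage continuous_subtype_val)
    (fun n => eq_univ_of_forall fun y => by
      obtain ⟨m, hm⟩ := mem_iUnion.1 (hSA n y.2)
      exact ⟨_, mem_range_self m, hm⟩)
  have hbound : ∀ n, ∃ M, ∀ W ∈ V n, W ⊆ Subtype.val ⁻¹' A n M := by
    intro n
    choose! m hm using fun W (hW : W ∈ V n) => (hVU n).1 hW
    obtain ⟨M, hM⟩ := ((hVU n).2.image m).bddAbove
    exact ⟨M, fun W hW => hm W hW ▸ preimage_mono (hAm n (hM (mem_image_of_mem m hW)))⟩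
  choose f hf using hbound
  exact ⟨f, fun y hy => (hV ⟨y, hy⟩).mono fun n ⟨W, hW, hyW⟩ => hf n W hW hyW⟩

lemma isHurewicz_of_forall_exists_eventually_mem [SecondCountableTopology α] {S : Set α}
    (h : ∀ A : ℕ → ℕ → Set α, (∀ n m, IsOpen (A n m)) → (∀ n, Monotone (A n)) →
      (∀ n, S ⊆ ⋃ m, A n m) → ∃ f : ℕ → ℕ, ∀ z ∈ S, ∀ᶠ n in atTop, z ∈ A n (f n)) :
    IsHurewicz S := by
  intro U hUo hUS
  rcases isEmpty_or_nonempty S with hS | hS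
  · exact ⟨fun _ => ∅, fun _ => ⟨empty_subset _, finite_empty⟩, isEmptyElim⟩
  have hseq : ∀ n, ∃ u : ℕ → Set S, (∀ k, u k ∈ U n) ∧ ⋃ k, u k = univ := by
    intro n
    obtain ⟨T, hTc, hTU, hT⟩ := isOpen_sUnion_countable (U n) (hUo n)
    rw [hUS n] at hT
    obtain ⟨u, rfl⟩ := hTc.exists_eq_range (Nonempty.of_sUnion_eq_univ hT)
    exact ⟨u, fun k => hTU (mem_range_self k), by rwa [← sUnion_range]⟩
  choose u huU hu using hseq
  choose L hLo hL using fun n k => isOpen_induced_iff.1 (hUo n _ (huU n k))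
  obtain ⟨f, hf⟩ := h (fun n => accumulate (L n)) (fun n m => isOpen_biUnion fun k _ => hLo n k)
    (fun _ => monotone_accumulate) fun n z hz => by
      obtain ⟨k, hk⟩ := mem_iUnion.1 (hu n ▸ mem_univ (⟨z, hz⟩ : S))
      rw [iUnion_accumulate]
      exact mem_iUnion.2 ⟨k, by rwa [← hL n k] at hk⟩
  refine ⟨fun n => u n '' Iic (f n), fun n => ⟨image_subset_iff.2 fun k _ => huU n k,
    (finite_Iic _).image _⟩, fun z => (hf z z.2).mono fun n hn => ?_⟩
  obtain ⟨k, hk, hzk⟩ := mem_accumulate.1 hn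
  exact ⟨u n k, mem_image_of_mem _ hk, hL n k ▸ hzk⟩

lemma IsHurewicz.exists_eventually_forall_mem_of_isCompact {Y : Set β} (hY : IsHurewicz Y)
    {K : Set α} (hK : IsCompact K) {W : ℕ → ℕ → Set (α × β)} (hW : ∀ n m, IsOpen (W n m))
    (hWm : ∀ n, Monotone (W n)) (hKY : ∀ n, K ×ˢ Y ⊆ ⋃ m, W n m) :
    ∃ g : ℕ → ℕ, ∀ y ∈ Y, ∀ᶠ n in atTop, ∀ x ∈ K, (x, y) ∈ W n (g n) := by
  refine hY.exists_eventually_mem (fun n m => hK.isOpen_setOf_forall_prod_mem (hW n m))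
    (fun n m m' h y hy x hx => hWm n h (hy x hx)) fun n y hy => ?_
  obtain ⟨m, hm⟩ := hK.elim_directed_cover (fun m => (·, y) ⁻¹' W n m)
    (fun m => (hW n m).preimage (Continuous.prodMk_left y))
    (fun x hx => by simpa using hKY n ⟨hx, hy⟩)
    (Monotone.directed_le fun m m' h => preimage_mono (hWm n h))
  exact mem_iUnion.2 ⟨m, fun x hx => hm hx⟩

lemma IsHurewicz.exists_forall_eventually_mem_of_isSigmaCompact {Y : Set β}
    (hY : IsHurewicz Y) {K : Set α} (hK : IsSigmaCompact K) {W : ℕ → ℕ → Set (α × β)}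
    (hW : ∀ n m, IsOpen (W n m)) (hWm : ∀ n, Monotone (W n)) (hKY : ∀ n, K ×ˢ Y ⊆ ⋃ m, W n m) :
    ∃ g : ℕ → ℕ, ∀ y ∈ Y, ∀ x ∈ K, ∀ᶠ n in atTop, (x, y) ∈ W n (g n) := by
  obtain ⟨C, hC, rfl⟩ := hK
  choose g hg using fun j => hY.exists_eventually_forall_mem_of_isCompact (hC j) hW hWm
    fun n => (prod_mono (subset_iUnion C j) Subset.rfl).trans (hKY n)
  obtain ⟨G, hG⟩ := exists_forall_eventually_le g
  refine ⟨G, fun y hy x hx => ?_⟩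
  obtain ⟨j, hj⟩ := mem_iUnion.1 hx
  filter_upwards [hg j y hy, hG j] with n hn hle using hWm n hle (hn x hj)

end Hurewicz

namespace PiNat

lemma eventually_notMem_cylinder {E : ℕ → Type*} {x y : ∀ n, E n} (hxy : x ≠ y) :
    ∀ᶠ m in atTop, x ∉ cylinder y m :=
  (eventually_gt_atTop (firstDiff x y)).mono fun _ hm h =>
    hm.not_ge ((mem_cylinder_iff_le_firstDiff hxy _).1 h)

variable {E : ℕ → Type*} [∀ n, TopologicalSpace (E n)] [∀ n, DiscreteTopology (E n)]

lemma isCompact_cylinder [∀ n, CompactSpace (E n)] (x : ∀ n, E n) (m : ℕ) :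
    IsCompact (cylinder x m) := by
  rw [cylinder_eq_pi]
  exact (isClosed_set_pi fun i _ => isClosed_singleton).isCompact

lemma exists_cylinder_subset {x : ∀ n, E n} {U : Set (∀ n, E n)} (hU : IsOpen U) (hx : x ∈ U) :
    ∃ m, cylinder x m ⊆ U := by
  obtain ⟨_, ⟨y, m, rfl⟩, hxy, hyU⟩ :=
    (isTopologicalBasis_cylinders E).exists_subset_of_mem_open hx hU
  exact ⟨m, mem_cylinder_iff_eq.1 hxy ▸ hyU⟩

end PiNat

section GδSeparation

open PiNat

variable {E : ℕ → Type*} [∀ n, TopologicalSpace (E n)] [∀ n, DiscreteTopology (E n)]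
  [∀ n, CompactSpace (E n)] {β : Type*} [TopologicalSpace β]

lemma IsHurewicz.exists_isGδ_prod_subset_of_isOpen {Y : Set β} (hY : IsHurewicz Y)
    {Q : Set (∀ n, E n)} (hQ : Q.Countable) {O : Set ((∀ n, E n) × β)} (hO : IsOpen O)
    (hQO : Q ×ˢ Y ⊆ O) : ∃ R, IsGδ R ∧ Q ⊆ R ∧ R ×ˢ Y ⊆ O := by
  rcases Q.eq_empty_or_nonempty with rfl | hQne
  · exact ⟨∅, isOpen_empty.isGδ, Subset.rfl, by simp⟩
  obtain ⟨q, rfl⟩ := hQ.exists_eq_range hQne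
  obtain ⟨b, hb⟩ := hY.exists_eventually_mem
    (A := fun j m => {y | ∀ x ∈ cylinder (q j) m, (x, y) ∈ O})
    (fun j m => (isCompact_cylinder _ _).isOpen_setOf_forall_prod_mem hO)
    (fun j m m' h y hy x hx => hy x (cylinder_anti _ h hx)) fun j y hy => by
      obtain ⟨m, hm⟩ := exists_cylinder_subset (hO.preimage (Continuous.prodMk_left y))
        (hQO ⟨mem_range_self j, hy⟩)
      exact mem_iUnion.2 ⟨m, fun x hx => hm hx⟩
  refine ⟨⋂ k, ⋃ j, cylinder (q j) (b j + k),
    .iInter_of_isOpen fun k => isOpen_iUnion fun j => isOpen_cylinder _ _ _,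
    range_subset_iff.2 fun j => mem_iInter.2 fun k => mem_iUnion.2 ⟨j, self_mem_cylinder _ _⟩, ?_⟩
  rintro ⟨x, y⟩ ⟨hx, hy⟩
  by_cases hxQ : x ∈ range q
  · exact hQO ⟨hxQ, hy⟩
  -- `y` lies over the cylinder of length `b j` around `q j` for all `j ≥ J`; a point `x ∉ Q` of
  -- `R` lies, for `k` large, in such a cylinder only for indices `j ≥ J`.
  obtain ⟨J, hJ⟩ := eventually_atTop.1 (hb y hy)
  obtain ⟨k, hk⟩ := ((finite_lt_nat J).eventually_all.2 fun j _ =>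
    eventually_notMem_cylinder fun h => hxQ ⟨j, h.symm⟩).exists
  obtain ⟨j, hj⟩ := mem_iUnion.1 (mem_iInter.1 hx k)
  have hJj : J ≤ j := not_lt.1 fun h => hk j h (cylinder_anti _ (Nat.le_add_left _ _) hj)
  exact hJ j hJj x (cylinder_anti _ (Nat.le_add_right _ _) hj)

lemma IsHurewicz.exists_isGδ_prod_subset {Y : Set β} (hY : IsHurewicz Y) {Q : Set (∀ n, E n)}
    (hQ : Q.Countable) {G : Set ((∀ n, E n) × β)} (hG : IsGδ G) (hQG : Q ×ˢ Y ⊆ G) :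
    ∃ R, IsGδ R ∧ Q ⊆ R ∧ R ×ˢ Y ⊆ G := by
  obtain ⟨O, hO, rfl⟩ := hG.eq_iInter_nat
  choose R hRG hQR hRO using fun n =>
    hY.exists_isGδ_prod_subset_of_isOpen hQ (hO n) (hQG.trans (iInter_subset O n))
  exact ⟨⋂ n, R n, .iInter hRG, subset_iInter hQR,
    subset_iInter fun n => (prod_mono (iInter_subset R n) Subset.rfl).trans (hRO n)⟩

end GδSeparation

theorem dagger_prod_hurewicz (hb : Cardinal.aleph 1 < bCardinal)
    (X Y : Set (ℕ → Bool)) (hY : IsHurewicz Y) (hX : DaggerProp X) :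
    IsHurewicz (X ×ˢ Y) := by
  refine isHurewicz_of_forall_exists_eventually_mem fun W hWo hWm hXYW => ?_
  have hG : IsGδ (⋂ n, ⋃ m, W n m) := .iInter fun n => (isOpen_iUnion (hWo n)).isGδ
  choose! R hRG hQR hRW using fun Q (hQX : Q ⊆ X) (hQ : Q.Countable) =>
    hY.exists_isGδ_prod_subset hQ hG ((prod_mono hQX Subset.rfl).trans (subset_iInter hXYW))
  obtain ⟨ι, hι, Qs, K, hQs, hK, hXK⟩ := hX R fun Q hQX hQ => ⟨hRG Q hQX hQ, hQR Q hQX hQ⟩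
  choose g hg using fun i => hY.exists_forall_eventually_mem_of_isSigmaCompact (hK i).1 hWo hWm
    fun n => ((prod_mono (hK i).2 Subset.rfl).trans (hRW _ (hQs i).1 (hQs i).2)).trans
      (iInter_subset _ n)
  obtain ⟨f, hf⟩ := exists_forall_eventually_le_of_mk_lt_bCardinal g (hι ▸ hb)
  refine ⟨f, fun z hz => ?_⟩
  obtain ⟨i, hi⟩ := mem_iUnion.1 (hXK hz.1)
  filter_upwards [hg i z.2 hz.2 z.1 hi, hf i] with n hn hle using hWm n hle hn
end

section
/- Under CH (the continuum hypothesis), every subset X of 2^ω satisfies property (†). -/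
theorem ch_implies_dagger (ch : Cardinal.continuum = Cardinal.aleph 1)
    (X : Set (ℕ → Bool)) : DaggerProp X := by
  have ch0 : Cardinal.continuum.{0} = Cardinal.aleph.{0} 1 :=
    Cardinal.lift_injective
      (by rw [Cardinal.lift_continuum, Cardinal.lift_aleph, Ordinal.lift_one]; exact ch)
  intro R hR
  set ι : Type := (Cardinal.aleph 1).out with hι
  have hmkι : Cardinal.mk ι = Cardinal.aleph 1 := Cardinal.mk_out _
  have hne : Nonempty ι := by
    rw [← Cardinal.mk_ne_zero_iff, hmkι]
    exact (Cardinal.aleph_pos 1).ne'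
  rcases Set.eq_empty_or_nonempty X with hX | hX
  · refine ⟨ι, hmkι, fun _ => ∅, fun _ => ∅, ?_, ?_, ?_⟩
    · intro i; exact ⟨Set.empty_subset _, Set.countable_empty⟩
    · intro i
      exact ⟨isSigmaCompact_empty, Set.empty_subset _⟩
    · simp [hX]
  · -- |X| ≤ continuum = ℵ₁ = |ι|, so there is a surjection ι → X
    have hXle : Cardinal.mk X ≤ Cardinal.mk ι := by
      calc Cardinal.mk X ≤ Cardinal.mk (ℕ → Bool) := Cardinal.mk_set_le X
        _ = Cardinal.continuum := by
          rw [Cardinal.mk_arrow]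
          simp [Cardinal.two_power_aleph0]
        _ = Cardinal.aleph 1 := ch0
        _ = Cardinal.mk ι := hmkι.symm
    obtain ⟨g⟩ := hXle
    have hXne : Nonempty X := hX.to_subtype
    have hsurj : Function.Surjective (Function.invFun g) :=
      Function.invFun_surjective g.injective
    set f : ι → X := Function.invFun g
    refine ⟨ι, hmkι, fun i => {(f i : ℕ → Bool)}, fun i => {(f i : ℕ → Bool)}, ?_, ?_, ?_⟩
    · intro i
      exact ⟨Set.singleton_subset_iff.2 (f i).2, Set.countable_singleton _⟩
    · intro i
      refine ⟨isCompact_singleton.isSigmaCompact, ?_⟩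
      exact (hR _ (Set.singleton_subset_iff.2 (f i).2) (Set.countable_singleton _)).2
    · intro x hx
      obtain ⟨i, hi⟩ := hsurj ⟨x, hx⟩
      refine Set.mem_iUnion.2 ⟨i, ?_⟩
      show x ∈ ({(f i : ℕ → Bool)} : Set _)
      rw [hi]
      exact rfl
end

section
/- A subspace X of 2^ω is Hurewicz if and only if its complement 2^ω∖X is σ-compactly controlled, i.e., for every σ-compact Q ⊆ 2^ω∖X there is a G_δ set R of 2^ω with Q ⊆ R ⊆ 2^ω∖X. -/
/-- \`Z\` is σ-compactly controlled if every σ-compact subset of \`Z\` is contained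
in a \`G_δ\` set contained in \`Z\`. -/
def SigmaCompactlyControlled (Z : Set (ℕ → Bool)) : Prop :=
  ∀ Q : Set (ℕ → Bool), Q ⊆ Z → IsSigmaCompact Q →
    ∃ R : Set (ℕ → Bool), IsGδ R ∧ Q ⊆ R ∧ R ⊆ Z

open Set Filter

noncomputable section HurewiczAux

/-- The clopen cylinder in `ℕ → Bool` determined by a finite list of bits. -/
def cylL (s : List Bool) : Set (ℕ → Bool) :=
  {y | ∀ i : Fin s.length, y i = s.get i}

lemma isClopen_cylL (s : List Bool) : IsClopen (cylL s) := by
  have : cylL s = ⋂ i : Fin s.length, {y : ℕ → Bool | y i = s.get i} := by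
    ext y; simp [cylL]
  rw [this]
  exact isClopen_iInter_of_finite fun i =>
    (isClopen_discrete {s.get i}).preimage (continuous_apply (i : ℕ))

/-- The cylinder of all sequences agreeing with `x` below `N`. -/
def cylN (x : ℕ → Bool) (N : ℕ) : Set (ℕ → Bool) := {y | ∀ i < N, y i = x i}

lemma cylN_eq_cylL (x : ℕ → Bool) (N : ℕ) :
    cylN x N = cylL (List.ofFn fun i : Fin N => x i) := by
  ext y
  constructor
  · intro hy i
    rw [List.get_ofFn]
    exact hy i (by simpa using i.isLt)
  · intro hy i hi
    have := hy ⟨i, by simpa using hi⟩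
    rwa [List.get_ofFn] at this

lemma isClopen_cylN (x : ℕ → Bool) (N : ℕ) : IsClopen (cylN x N) := by
  rw [cylN_eq_cylL]; exact isClopen_cylL _

lemma mem_cylN_self (x : ℕ → Bool) (N : ℕ) : x ∈ cylN x N := fun _ _ => rfl

lemma cylN_antitone (x : ℕ → Bool) {M N : ℕ} (h : M ≤ N) : cylN x N ⊆ cylN x M :=
  fun _ hy i hi => hy i (hi.trans_le h)

lemma exists_cylN_subset {O : Set (ℕ → Bool)} (hO : IsOpen O) {x : ℕ → Bool}
    (hx : x ∈ O) : ∃ N, cylN x N ⊆ O := by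
  obtain ⟨I, u, hu, hsub⟩ := isOpen_pi_iff.mp hO x hx
  refine ⟨(I.sup id) + 1, fun y hy => hsub ?_⟩
  intro a ha
  have : y a = x a := hy a (Nat.lt_succ_of_le (Finset.le_sup (f := id) ha))
  rw [this]; exact (hu a ha).2

lemma exists_cylN_disjoint {K : Set (ℕ → Bool)} (hK : IsCompact K) {x : ℕ → Bool}
    (hx : x ∉ K) : ∃ N, cylN x N ∩ K = ∅ := by
  have hempty : K ∩ ⋂ N, cylN x N = ∅ := by
    apply eq_empty_iff_forall_notMem.mpr
    rintro y ⟨hyK, hy⟩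
    have : y = x := by
      funext i
      exact (mem_iInter.mp hy (i + 1)) i (Nat.lt_succ_self i)
    exact hx (this ▸ hyK)
  obtain ⟨t, ht⟩ := hK.elim_finite_subfamily_closed (fun N => cylN x N)
    (fun N => (isClopen_cylN x N).isClosed) hempty
  refine ⟨(t.sup id) + 1, eq_empty_iff_forall_notMem.mpr ?_⟩
  rintro y ⟨hy1, hy2⟩
  refine eq_empty_iff_forall_notMem.mp ht y ⟨hy2, mem_iInter₂.mpr fun N hN => ?_⟩
  exact cylN_antitone x (Nat.le_succ_of_le (Finset.le_sup (f := id) hN)) hy1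

lemma forward_dir (X : Set (ℕ → Bool)) (hX : IsHurewicz X) :
    SigmaCompactlyControlled Xᶜ := by
  classical
  intro Q hQX hQ
  obtain ⟨K0, hK0c, hK0u⟩ := hQ
  set K : ℕ → Set (ℕ → Bool) := fun n => ⋃ m ≤ n, K0 m with hKdef
  have hKc : ∀ n, IsCompact (K n) := fun n =>
    (Set.finite_Iic n).isCompact_biUnion (fun m _ => hK0c m)
  have hKQ : ∀ n, K n ⊆ Q := by
    intro n y hy
    obtain ⟨m, _, hm⟩ := mem_iUnion₂.mp hy
    exact hK0u ▸ mem_iUnion.mpr ⟨m, hm⟩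
  have hKmono : ∀ {m n : ℕ}, m ≤ n → K m ⊆ K n := by
    intro m n h y hy
    obtain ⟨i, hi, hyi⟩ := mem_iUnion₂.mp hy
    exact mem_iUnion₂.mpr ⟨i, hi.trans h, hyi⟩
  have hQK : ∀ y ∈ Q, ∃ m, y ∈ K m := by
    intro y hy
    obtain ⟨m, hm⟩ := mem_iUnion.mp (hK0u ▸ hy : y ∈ ⋃ n, K0 n)
    exact ⟨m, mem_iUnion₂.mpr ⟨m, le_refl m, hm⟩⟩
  set U : ℕ → Set (Set ↥X) := fun n =>
    {V | ∃ C : Set (ℕ → Bool), IsClopen C ∧ C ∩ K n = ∅ ∧ V = Subtype.val ⁻¹' C}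
    with hUdef
  have hUopen : ∀ n, ∀ V ∈ U n, IsOpen V := by
    rintro n V ⟨C, hC, -, rfl⟩
    exact hC.isOpen.preimage continuous_subtype_val
  have hUcov : ∀ n, ⋃₀ U n = Set.univ := by
    intro n
    apply eq_univ_iff_forall.mpr
    intro x
    have hxK : (x : ℕ → Bool) ∉ K n := fun h => (hQX (hKQ n h)) x.2
    obtain ⟨N, hN⟩ := exists_cylN_disjoint (hKc n) hxK
    exact ⟨Subtype.val ⁻¹' cylN x N, ⟨cylN x N, isClopen_cylN _ _, hN, rfl⟩,
      mem_cylN_self x N⟩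
  obtain ⟨V, hVfin, hVcov⟩ := hX U hUopen hUcov
  set pickC : ℕ → Set ↥X → Set (ℕ → Bool) := fun n W =>
    if h : ∃ C : Set (ℕ → Bool), IsClopen C ∧ C ∩ K n = ∅ ∧ W = Subtype.val ⁻¹' C
    then h.choose else ∅ with hpickdef
  have hpick : ∀ n W, W ∈ U n →
      IsClopen (pickC n W) ∧ pickC n W ∩ K n = ∅ ∧ W = Subtype.val ⁻¹' pickC n W := by
    intro n W hW
    have h : ∃ C : Set (ℕ → Bool), IsClopen C ∧ C ∩ K n = ∅ ∧ W = Subtype.val ⁻¹' C := hW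
    simp only [hpickdef, dif_pos h]
    exact h.choose_spec
  set W : ℕ → Set (ℕ → Bool) := fun n => ⋃ A ∈ V n, pickC n A with hWdef
  have hWclosed : ∀ n, IsClosed (W n) :=
    fun n => (hVfin n).2.isClosed_biUnion
      (fun A hA => (hpick n A ((hVfin n).1 hA)).1.isClosed)
  have hWK : ∀ n, W n ∩ K n = ∅ := by
    intro n
    apply eq_empty_iff_forall_notMem.mpr
    rintro y ⟨hy1, hy2⟩
    obtain ⟨A, hA, hyA⟩ := mem_iUnion₂.mp hy1
    exact eq_empty_iff_forall_notMem.mp (hpick n A ((hVfin n).1 hA)).2.1 y ⟨hyA, hy2⟩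
  set F : ℕ → Set (ℕ → Bool) := fun N => ⋂ n, ⋂ (_ : N ≤ n), W n with hFdef
  have hFclosed : ∀ N, IsClosed (F N) :=
    fun N => isClosed_iInter fun n => isClosed_iInter fun _ => hWclosed n
  refine ⟨⋂ N, (F N)ᶜ, IsGδ.iInter_of_isOpen fun N => (hFclosed N).isOpen_compl,
    ?_, ?_⟩
  · intro y hy
    obtain ⟨m, hm⟩ := hQK y hy
    apply mem_iInter.mpr
    intro N hyF
    have h1 : y ∈ W (max N m) := mem_iInter₂.mp hyF (max N m) (le_max_left N m)
    have h2 : y ∈ K (max N m) := hKmono (le_max_right N m) hm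
    exact eq_empty_iff_forall_notMem.mp (hWK (max N m)) y ⟨h1, h2⟩
  · intro y hy
    intro hyX
    obtain ⟨N, hN⟩ := eventually_atTop.mp (hVcov ⟨y, hyX⟩)
    apply mem_iInter.mp hy N
    apply mem_iInter₂.mpr
    intro n hn
    obtain ⟨A, hA, hxA⟩ := hN n hn
    have := (hpick n A ((hVfin n).1 hA)).2.2
    exact mem_iUnion₂.mpr ⟨A, hA, by rwa [this] at hxA⟩

lemma backward_dir (X : Set (ℕ → Bool)) (hC : SigmaCompactlyControlled Xᶜ) :
    IsHurewicz X := by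
  classical
  intro U hUopen hUcov
  obtain ⟨f, hf⟩ := exists_surjective_nat (List Bool)
  set S : ℕ → Set ℕ := fun n =>
    {k | ∃ V ∈ U n, (Subtype.val ⁻¹' cylL (f k) : Set ↥X) ⊆ V} with hSdef
  set pick : ℕ → ℕ → Set ↥X := fun n k =>
    if h : ∃ V ∈ U n, (Subtype.val ⁻¹' cylL (f k) : Set ↥X) ⊆ V
    then h.choose else ∅ with hpickdef
  have hpick : ∀ n k, k ∈ S n →
      pick n k ∈ U n ∧ (Subtype.val ⁻¹' cylL (f k) : Set ↥X) ⊆ pick n k := by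
    intro n k hk
    have h : ∃ V ∈ U n, (Subtype.val ⁻¹' cylL (f k) : Set ↥X) ⊆ V := hk
    simp only [hpickdef, dif_pos h]
    exact h.choose_spec
  set D : ℕ → ℕ → Set (ℕ → Bool) := fun n m =>
    ⋃ k ∈ {k | k ≤ m ∧ k ∈ S n}, cylL (f k) with hDdef
  have hDopen : ∀ n m, IsOpen (D n m) :=
    fun n m => isOpen_biUnion fun k _ => (isClopen_cylL (f k)).isOpen
  have hDmono : ∀ n, ∀ {m m' : ℕ}, m ≤ m' → D n m ⊆ D n m' := by
    intro n m m' h y hy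
    obtain ⟨k, ⟨hk1, hk2⟩, hyk⟩ := mem_iUnion₂.mp hy
    exact mem_iUnion₂.mpr ⟨k, ⟨hk1.trans h, hk2⟩, hyk⟩
  have hXD : ∀ n, ∀ x ∈ X, ∃ m, x ∈ D n m := by
    intro n x hx
    have hp : (⟨x, hx⟩ : ↥X) ∈ ⋃₀ U n := (hUcov n) ▸ mem_univ _
    obtain ⟨V, hV, hpV⟩ := hp
    obtain ⟨O, hOopen, hOV⟩ := isOpen_induced_iff.mp (hUopen n V hV)
    have hxO : x ∈ O := by
      have : (⟨x, hx⟩ : ↥X) ∈ Subtype.val ⁻¹' O := hOV ▸ hpV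
      exact this
    obtain ⟨N, hN⟩ := exists_cylN_subset hOopen hxO
    obtain ⟨k, hk⟩ := hf (List.ofFn fun i : Fin N => x i)
    have hcyl : cylL (f k) = cylN x N := by rw [hk, cylN_eq_cylL]
    have hkS : k ∈ S n := by
      refine ⟨V, hV, ?_⟩
      rw [hcyl]
      intro p hp
      exact hOV ▸ (fun h => h) (mem_preimage.mpr (hN hp))
    refine ⟨k, mem_iUnion₂.mpr ⟨k, ⟨le_refl k, hkS⟩, ?_⟩⟩
    rw [hcyl]; exact mem_cylN_self x N
  set Q : Set (ℕ → Bool) := ⋃ n, ⋂ m, (D n m)ᶜ with hQdef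
  have hQXc : Q ⊆ Xᶜ := by
    rintro y hy hyX
    obtain ⟨n, hn⟩ := mem_iUnion.mp hy
    obtain ⟨m, hm⟩ := hXD n y hyX
    exact (mem_iInter.mp hn m) hm
  have hQsc : IsSigmaCompact Q := by
    refine ⟨fun n => ⋂ m, (D n m)ᶜ, fun n => ?_, rfl⟩
    exact (isClosed_iInter fun m => (hDopen n m).isClosed_compl).isCompact
  obtain ⟨R, hRGδ, hQR, hRX⟩ := hC Q hQXc hQsc
  obtain ⟨T, hTopen, hTcount, hTeq⟩ := hRGδ
  obtain ⟨g, hg⟩ := (hTcount.insert univ).exists_eq_range (insert_nonempty _ _)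
  have hgopen : ∀ j, IsOpen (g j) := by
    intro j
    have : g j ∈ insert univ T := hg ▸ mem_range_self j
    rcases this with h | h
    · rw [h]; exact isOpen_univ
    · exact hTopen _ h
  have hRg : R = ⋂ j, g j := by
    rw [hTeq, ← sInter_range, ← hg, sInter_insert, univ_inter]
  set E : ℕ → Set (ℕ → Bool) := fun j => ⋃ i ∈ {i | i ≤ j}, (g i)ᶜ with hEdef
  have hEclosed : ∀ j, IsClosed (E j) :=
    fun j => (Set.finite_Iic j).isClosed_biUnion fun i _ => (hgopen i).isClosed_compl
  have hEmono : ∀ {j j' : ℕ}, j ≤ j' → E j ⊆ E j' := by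
    intro j j' h y hy
    obtain ⟨i, hi, hyi⟩ := mem_iUnion₂.mp hy
    exact mem_iUnion₂.mpr ⟨i, hi.trans h, hyi⟩
  have hXE : ∀ x ∈ X, ∃ j, x ∈ E j := by
    intro x hx
    have hxR : x ∉ R := fun h => hRX h hx
    rw [hRg] at hxR
    obtain ⟨j, hj⟩ := not_forall.mp (fun h => hxR (mem_iInter.mpr h))
    exact ⟨j, mem_iUnion₂.mpr ⟨j, le_refl j, hj⟩⟩
  have hED : ∀ j n, E j ⊆ ⋃ m, D n m := by
    intro j n y hy
    have hyR : y ∉ R := by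
      rw [hRg]
      intro hyR
      obtain ⟨i, _, hyi⟩ := mem_iUnion₂.mp hy
      exact hyi (mem_iInter.mp hyR i)
    have hyQ : y ∉ Q := fun h => hyR (hQR h)
    by_contra hnot
    exact hyQ (mem_iUnion.mpr ⟨n, mem_iInter.mpr fun m =>
      fun hm => hnot (mem_iUnion.mpr ⟨m, hm⟩)⟩)
  have hM : ∀ n, ∃ M, E n ⊆ D n M := by
    intro n
    obtain ⟨t, ht⟩ := ((hEclosed n).isCompact).elim_finite_subcover
      (fun m => D n m) (fun m => hDopen n m) (by intro y hy; simpa using hED n n hy)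
    refine ⟨t.sup id, fun y hy => ?_⟩
    obtain ⟨m, hm, hym⟩ := mem_iUnion₂.mp (ht hy)
    exact hDmono n (Finset.le_sup (f := id) hm) hym
  choose M hMsub using hM
  refine ⟨fun n => pick n '' {k | k ≤ M n ∧ k ∈ S n}, fun n => ⟨?_, ?_⟩, ?_⟩
  · rintro V ⟨k, ⟨-, hkS⟩, rfl⟩
    exact (hpick n k hkS).1
  · exact ((Set.finite_Iic (M n)).subset fun k hk => hk.1).image _
  · intro x
    obtain ⟨j, hj⟩ := hXE x x.2
    apply eventually_atTop.mpr
    refine ⟨j, fun n hn => ?_⟩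
    have hxD : (x : ℕ → Bool) ∈ D n (M n) := hMsub n (hEmono hn hj)
    obtain ⟨k, ⟨hk1, hk2⟩, hyk⟩ := mem_iUnion₂.mp hxD
    exact ⟨pick n k, mem_image_of_mem _ ⟨hk1, hk2⟩, (hpick n k hk2).2 hyk⟩

end HurewiczAux

theorem hurewicz_iff_complement_sigmaCompactlyControlled (X : Set (ℕ → Bool)) :
    IsHurewicz X ↔ SigmaCompactlyControlled Xᶜ :=
  ⟨forward_dir X, backward_dir X⟩
end

section
/- Let 𝒜 be an ω-mad family on ω and ℱ(𝒜) = { F ⊆ ω : there is a finite 𝒜' ⊆ 𝒜 with ω∖∪𝒜' ⊆* F } the dual filter. Then for every countable subset 𝒳 of ℱ(𝒜)^+ (the sets having infinite intersection with every member of ℱ(𝒜)) there exists a G_δ subset of 𝒫(ω) containing 𝒳 and contained in ℱ(𝒜)^+; that is, ℱ(𝒜)^+ is countably controlled. -/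
open Classical in
/-- Characteristic-function identification of `𝒫(ω)` with the Cantor space. -/
noncomputable def chi (Z : Set ℕ) : ℕ → Bool := fun n => if n ∈ Z then true else false

/-- `𝒜` is a mad (maximal almost disjoint) family on `ω`. -/
def IsMadFamily (A : Set (Set ℕ)) : Prop :=
  A.Infinite ∧ (∀ a ∈ A, a.Infinite) ∧
    (∀ a ∈ A, ∀ b ∈ A, a ≠ b → (a ∩ b).Finite) ∧
    (∀ B : Set ℕ, B.Infinite → ∃ a ∈ A, (B ∩ a).Infinite)

/-- The filter `ℱ(𝒜)` generated by complements of finite unions of members of `𝒜`. -/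
def madFilter (A : Set (Set ℕ)) : Set (Set ℕ) :=
  { F | ∃ A0 : Set (Set ℕ), A0 ⊆ A ∧ A0.Finite ∧ ((⋃₀ A0)ᶜ \ F).Finite }

/-- The `ℱ(𝒜)`-positive sets. -/
def madFilterPos (A : Set (Set ℕ)) : Set (Set ℕ) :=
  { X | ∀ F ∈ madFilter A, (X ∩ F).Infinite }

/-- `𝒜` is ω-mad. -/
def IsOmegaMad (A : Set (Set ℕ)) : Prop :=
  IsMadFamily A ∧
    ∀ Xs : ℕ → Set ℕ, (∀ n, Xs n ∈ madFilterPos A) →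
      ∃ a ∈ A, ∀ n, (a ∩ Xs n).Infinite

/-! ### Auxiliary lemmas -/

lemma mad_inter_sUnion_finite {A : Set (Set ℕ)} (hA : IsMadFamily A) {a : Set ℕ}
    (ha : a ∈ A) {A0 : Set (Set ℕ)} (hs : A0 ⊆ A) (hf : A0.Finite) (hna : a ∉ A0) :
    (a ∩ ⋃₀ A0).Finite := by
  have h1 : (⋃ b ∈ A0, a ∩ b).Finite :=
    hf.biUnion (fun b hb => hA.2.2.1 a ha b (hs hb) (fun h => hna (h ▸ hb)))
  refine h1.subset ?_
  rintro x ⟨hxa, t, ht, hxt⟩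
  exact Set.mem_biUnion ht ⟨hxa, hxt⟩

lemma mad_univ_pos {A : Set (Set ℕ)} (hA : IsMadFamily A) :
    Set.univ ∈ madFilterPos A := by
  rintro F ⟨A0, hs, hf, hfin⟩
  have hne : (A \ A0).Nonempty := (hA.1.diff hf).nonempty
  obtain ⟨a, haA, hna⟩ := hne
  have hai : a.Infinite := hA.2.1 a haA
  have h2 : (a \ (a ∩ ⋃₀ A0)).Infinite := hai.diff (mad_inter_sUnion_finite hA haA hs hf hna)
  have h3 : (a \ ⋃₀ A0).Infinite := h2.mono (by rintro x ⟨hxa, hx⟩; exact ⟨hxa, fun h => hx ⟨hxa, h⟩⟩)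
  have hsub : a \ ⋃₀ A0 ⊆ F ∪ ((⋃₀ A0)ᶜ \ F) := by
    rintro x ⟨hxa, hx⟩
    by_cases hxF : x ∈ F
    · exact Or.inl hxF
    · exact Or.inr ⟨hx, hxF⟩
  intro hFin
  have hF : F.Finite := by simpa using hFin
  exact (h3.mono hsub) (hF.union hfin)

lemma mad_pos_of_inter {A : Set (Set ℕ)} (hA : IsMadFamily A) {Z : Set ℕ} {a : ℕ → Set ℕ}
    (haA : ∀ k, a k ∈ A) (hinj : Function.Injective a)
    (hZ : ∀ k, (Z ∩ a k).Infinite) : Z ∈ madFilterPos A := by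
  rintro F ⟨A0, hs, hf, hfin⟩
  have hk : ∃ k, a k ∉ A0 := by
    by_contra h
    push_neg at h
    exact (Set.infinite_range_of_injective hinj) (hf.subset (Set.range_subset_iff.2 h))
  obtain ⟨k, hk⟩ := hk
  have h1 : ((Z ∩ a k) \ (a k ∩ ⋃₀ A0)).Infinite :=
    (hZ k).diff (mad_inter_sUnion_finite hA (haA k) hs hf hk)
  have h2 : ((Z ∩ a k) \ ⋃₀ A0).Infinite :=
    h1.mono (by rintro x ⟨⟨hxZ, hxa⟩, hx⟩; exact ⟨⟨hxZ, hxa⟩, fun h => hx ⟨hxa, h⟩⟩)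
  have hsub : (Z ∩ a k) \ ⋃₀ A0 ⊆ (Z ∩ F) ∪ ((⋃₀ A0)ᶜ \ F) := by
    rintro x ⟨⟨hxZ, _⟩, hx⟩
    by_cases hxF : x ∈ F
    · exact Or.inl ⟨hxZ, hxF⟩
    · exact Or.inr ⟨hx, hxF⟩
  intro hFin
  exact (h2.mono hsub) (hFin.union hfin)

lemma mad_filter_diff {A : Set (Set ℕ)} {b F : Set ℕ} (hb : b ∈ A)
    (hF : F ∈ madFilter A) : F \ b ∈ madFilter A := by
  obtain ⟨A0, hs, hf, hfin⟩ := hF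
  refine ⟨insert b A0, Set.insert_subset hb hs, hf.insert b, hfin.subset ?_⟩
  rintro x ⟨hx1, hx2⟩
  rw [Set.mem_compl_iff, Set.mem_sUnion] at hx1
  push_neg at hx1
  refine ⟨fun h => ?_, fun hxF => hx2 ⟨hxF, hx1 b (Set.mem_insert b A0)⟩⟩
  obtain ⟨t, ht, hxt⟩ := h
  exact hx1 t (Set.mem_insert_of_mem b ht) hxt

open Classical in
/-- Choice of a member of `A` meeting each `g n \ U` infinitely. -/
noncomputable def madPick (A : Set (Set ℕ)) (g : ℕ → Set ℕ) (U : Set ℕ) : Set ℕ :=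
  Classical.epsilon (fun a => a ∈ A ∧ ∀ n, (a ∩ (g n \ U)).Infinite)

/-- Increasing unions of chosen members. -/
noncomputable def madU (A : Set (Set ℕ)) (g : ℕ → Set ℕ) : ℕ → Set ℕ
  | 0 => ∅
  | k + 1 => madU A g k ∪ madPick A g (madU A g k)

/-- The `k`-th chosen member. -/
noncomputable def madA (A : Set (Set ℕ)) (g : ℕ → Set ℕ) (k : ℕ) : Set ℕ :=
  madPick A g (madU A g k)

theorem madFilterPos_countablyControlled (A : Set (Set ℕ)) (hA : IsOmegaMad A) :
    ∀ Xc : Set (Set ℕ), Xc ⊆ madFilterPos A → Xc.Countable →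
      ∃ R : Set (ℕ → Bool), IsGδ R ∧ chi '' Xc ⊆ R ∧ R ⊆ chi '' madFilterPos A := by
  intro Xc hXc hXcc
  obtain ⟨hmad, homega⟩ := hA
  -- enumerate Xc (padded with `univ`, which is positive)
  have hYpos : insert Set.univ Xc ⊆ madFilterPos A := by
    rintro X (rfl | hX)
    · exact mad_univ_pos hmad
    · exact hXc hX
  obtain ⟨g, hg⟩ := (hXcc.insert Set.univ).exists_eq_range ⟨_, Set.mem_insert _ _⟩
  have hgpos : ∀ n, g n ∈ madFilterPos A := fun n => hYpos (hg ▸ Set.mem_range_self n)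
  -- properties of the recursive construction
  have spec : ∀ k, (∀ F ∈ madFilter A, F \ madU A g k ∈ madFilter A) →
      madA A g k ∈ A ∧ ∀ n, (madA A g k ∩ (g n \ madU A g k)).Infinite := by
    intro k hk
    have hpos : ∀ n, g n \ madU A g k ∈ madFilterPos A := by
      intro n F hF
      have h := hgpos n (F \ madU A g k) (hk F hF)
      exact h.mono (by rintro x ⟨hx1, hx2, hx3⟩; exact ⟨⟨hx1, hx3⟩, hx2⟩)
    obtain ⟨b, hbA, hb⟩ := homega _ hpos
    exact Classical.epsilon_spec (⟨b, hbA, hb⟩ :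
      ∃ a, a ∈ A ∧ ∀ n, (a ∩ (g n \ madU A g k)).Infinite)
  have hcl : ∀ k, ∀ F ∈ madFilter A, F \ madU A g k ∈ madFilter A := by
    intro k
    induction k with
    | zero => intro F hF; simpa [madU] using hF
    | succ k ih =>
      intro F hF
      have hak : madA A g k ∈ A := (spec k ih).1
      have heq : F \ madU A g (k + 1) = (F \ madU A g k) \ madA A g k := by
        rw [Set.diff_diff]; rfl
      rw [heq]
      exact mad_filter_diff hak (ih F hF)
  have hspec : ∀ k, madA A g k ∈ A ∧ ∀ n, (madA A g k ∩ (g n \ madU A g k)).Infinite :=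
    fun k => spec k (hcl k)
  -- monotonicity and injectivity
  have hmono : ∀ i k, i ≤ k → madU A g i ⊆ madU A g k := by
    intro i k hik
    induction k with
    | zero => rw [Nat.le_zero.1 hik]
    | succ k ih =>
      rcases eq_or_lt_of_le hik with h | h
      · rw [h]
      · exact (ih (Nat.lt_succ_iff.1 h)).trans Set.subset_union_left
  have hsubU : ∀ i k, i < k → madA A g i ⊆ madU A g k := by
    intro i k hik
    have : madA A g i ⊆ madU A g (i + 1) := Set.subset_union_right
    exact this.trans (hmono _ _ hik)
  have hinj : Function.Injective (madA A g) := by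
    have key : ∀ i k, i < k → madA A g i ≠ madA A g k := by
      intro i k hik heq
      obtain ⟨x, hx1, _, hx3⟩ := ((hspec k).2 0).nonempty
      exact hx3 (hsubU i k hik (heq ▸ hx1))
    intro i k h
    rcases lt_trichotomy i k with h' | h' | h'
    · exact absurd h (key i k h')
    · exact h'
    · exact absurd h.symm (key k i h')
  -- the Gδ set
  refine ⟨⋂ k, ⋂ j, {f : ℕ → Bool | ∃ m, j ≤ m ∧ m ∈ madA A g k ∧ f m = true}, ?_, ?_, ?_⟩
  · refine IsGδ.iInter fun k => IsGδ.iInter fun j => IsOpen.isGδ ?_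
    have : {f : ℕ → Bool | ∃ m, j ≤ m ∧ m ∈ madA A g k ∧ f m = true} =
        ⋃ m, ⋃ (_ : j ≤ m ∧ m ∈ madA A g k), {f : ℕ → Bool | f m = true} := by
      ext f; simp only [Set.mem_setOf_eq, Set.mem_iUnion]; tauto
    rw [this]
    refine isOpen_iUnion fun m => isOpen_iUnion fun _ => ?_
    exact (isOpen_discrete ({true} : Set Bool)).preimage
      (continuous_apply m : Continuous fun f : ℕ → Bool => f m)
  · rintro f ⟨X, hX, rfl⟩
    simp only [Set.mem_iInter, Set.mem_setOf_eq]
    intro k j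
    have hXr : X ∈ Set.range g := hg ▸ Set.mem_insert_of_mem _ hX
    obtain ⟨n, rfl⟩ := hXr
    have hinf : (g n ∩ madA A g k).Infinite :=
      ((hspec k).2 n).mono (by rintro x ⟨hx1, hx2, _⟩; exact ⟨hx2, hx1⟩)
    obtain ⟨m, ⟨hm1, hm2⟩, hm3⟩ := hinf.exists_gt j
    exact ⟨m, le_of_lt hm3, hm2, if_pos hm1⟩
  · intro f hf
    simp only [Set.mem_iInter, Set.mem_setOf_eq] at hf
    refine ⟨{m | f m = true}, ?_, ?_⟩
    · refine mad_pos_of_inter hmad (fun k => (hspec k).1) hinj (fun k => ?_)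
      refine Set.infinite_of_forall_exists_gt fun j => ?_
      obtain ⟨m, hm1, hm2, hm3⟩ := hf k (j + 1)
      exact ⟨m, ⟨hm3, hm2⟩, Nat.lt_of_succ_le hm1⟩
    · funext m
      by_cases hm : f m = true
      · simp [chi, hm]
      · simp only [Bool.not_eq_true] at hm
        simp [chi, hm]
end
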